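/- arXiv:1806.05546 — 2 statements merged into one kernel-verified Lean document; each statement's English description precedes it below -/
import Mathlib

section
/- Let WF iterates be defined by f_{τ+1} = f_τ − μ̄·G(f_τ) starting from an arbitrary f_0 ∈ ℂ^N, where μ̄ = 1/λmax(A^H A) and G is the generalized gradient of the amplitude loss L, and let f̂ be a global minimizer of L. Then for every T ≥ 0, min_{τ ∈ {0,1,…,T}} ‖G(f_τ)‖₂² ≤ (L(f_0) − L(f̂)) / (μ̄·(T+1)). -/
/-
With the phases of `A f` frozen, `c = b ⊙ sgn(A f)`, the loss is majorized up to a constant by the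
quadratic surrogate `g ↦ ‖A g - c‖²`, with equality at `g = f`: for `z ≠ 0` this is the reverse
triangle inequality `|b - |w|| ≤ |w - b sgn z|`. The gradient of the surrogate at `f` is `G(f)`,
and since `μ̄ ‖A‖² ≤ 1` one gradient step lowers the surrogate, hence the loss, by at least
`μ̄ ‖G(f)‖²`. Summing `μ̄ ‖G(f_τ)‖² ≤ L(f_τ) - L(f_{τ+1})` over `τ ≤ T` telescopes to at most
`L(f_0) - L(f̂)`, and the minimum is at most the average.
-/

open scoped BigOperators
open Matrix

noncomputable section

namespace AWF

/-- Complex signum: `z/|z|` for `z ≠ 0`, and `0` at `0`. -/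
def csgn (z : ℂ) : ℂ := if z = 0 then 0 else z / ((‖z‖ : ℝ) : ℂ)

variable {M N : ℕ}

/-- Amplitude loss `L(f) = ∑ (b_m − |(Af)_m|)²`. -/
def ampLoss (A : Matrix (Fin M) (Fin N) ℂ) (b : Fin M → ℝ) (f : Fin N → ℂ) : ℝ :=
  ∑ m, (b m - ‖A.mulVec f m‖) ^ 2

/-- Generalized (Wirtinger) gradient `G(f) = Aᴴ(Af − b ⊙ sgn(Af))`. -/
def wGrad (A : Matrix (Fin M) (Fin N) ℂ) (b : Fin M → ℝ) (f : Fin N → ℂ) : Fin N → ℂ :=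
  Aᴴ.mulVec (fun m => A.mulVec f m - (b m : ℂ) * csgn (A.mulVec f m))

/-- Euclidean (ℓ₂) norm of a complex vector. -/
def norm2 {n : ℕ} (v : Fin n → ℂ) : ℝ := Real.sqrt (∑ i, ‖v i‖ ^ 2)

/-- The largest eigenvalue of the positive semidefinite Hermitian matrix `Aᴴ A`. -/
def lamMax (A : Matrix (Fin M) (Fin N) ℂ) : ℝ :=
  ⨆ i, (Matrix.isHermitian_conjTranspose_mul_self A).eigenvalues i

end AWF

open WithLp
open scoped Matrix.Norms.L2Operator

namespace ContinuousLinearMap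

theorem norm_sub_smul_apply_adjoint_sq_le {𝕜 E F : Type*} [RCLike 𝕜]
    [NormedAddCommGroup E] [InnerProductSpace 𝕜 E] [CompleteSpace E]
    [NormedAddCommGroup F] [InnerProductSpace 𝕜 F] [CompleteSpace F]
    (T : E →L[𝕜] F) (r : F) {μ : ℝ} (hμ : 0 ≤ μ) (hμT : μ * ‖T‖ ^ 2 ≤ 1) :
    ‖r - (μ : 𝕜) • T (adjoint T r)‖ ^ 2 ≤ ‖r‖ ^ 2 - μ * ‖adjoint T r‖ ^ 2 := by
  have hinner : RCLike.re (inner 𝕜 r ((μ : 𝕜) • T (adjoint T r))) = μ * ‖adjoint T r‖ ^ 2 := by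
    rw [inner_smul_right, ← adjoint_inner_left, inner_self_eq_norm_sq_to_K, RCLike.re_ofReal_mul]
    norm_cast
  have hquad : ‖(μ : 𝕜) • T (adjoint T r)‖ ^ 2 ≤ μ * ‖adjoint T r‖ ^ 2 :=
    calc ‖(μ : 𝕜) • T (adjoint T r)‖ ^ 2 = μ ^ 2 * ‖T (adjoint T r)‖ ^ 2 := by
          rw [norm_smul, RCLike.norm_ofReal, abs_of_nonneg hμ, mul_pow]
      _ ≤ μ ^ 2 * (‖T‖ * ‖adjoint T r‖) ^ 2 := by gcongr; exact T.le_opNorm _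
      _ = μ * (μ * ‖T‖ ^ 2) * ‖adjoint T r‖ ^ 2 := by ring
      _ ≤ μ * 1 * ‖adjoint T r‖ ^ 2 := by gcongr
      _ = μ * ‖adjoint T r‖ ^ 2 := by rw [mul_one]
  rw [@norm_sub_sq 𝕜, hinner]
  linarith

end ContinuousLinearMap

theorem Matrix.norm_sub_smul_mulVec_conjTranspose_mulVec_sq_le {𝕜 m n : Type*} [RCLike 𝕜]
    [Fintype m] [Fintype n] [DecidableEq n] (A : Matrix m n 𝕜) (r : m → 𝕜) {μ : ℝ}
    (hμ : 0 ≤ μ) (hμA : μ * ‖A‖ ^ 2 ≤ 1) :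
    ‖toLp 2 (r - μ • A *ᵥ (Aᴴ *ᵥ r))‖ ^ 2 ≤ ‖toLp 2 r‖ ^ 2 - μ * ‖toLp 2 (Aᴴ *ᵥ r)‖ ^ 2 := by
  classical
  set T := (toEuclideanLin A).toContinuousLinearMap
  have hadj : ∀ x, ContinuousLinearMap.adjoint T (toLp 2 x) = toLp 2 (Aᴴ *ᵥ x) := fun x => by
    rw [← LinearMap.adjoint_toContinuousLinearMap, ← toEuclideanLin_conjTranspose_eq_adjoint]
    rfl
  have hstep : toLp 2 (r - μ • A *ᵥ (Aᴴ *ᵥ r))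
      = toLp 2 r - (μ : 𝕜) • T (ContinuousLinearMap.adjoint T (toLp 2 r)) := by
    rw [hadj, RCLike.real_smul_eq_coe_smul (K := 𝕜)]
    rfl
  rw [hstep, ← hadj]
  exact T.norm_sub_smul_apply_adjoint_sq_le _ hμ hμA

theorem inf'_range_le_div_of_descent {L S : ℕ → ℝ} {μ ℓ : ℝ} (hμ : 0 < μ)
    (hstep : ∀ τ, L (τ + 1) ≤ L τ - μ * S τ) (hℓ : ∀ τ, ℓ ≤ L τ) (T : ℕ) :
    (Finset.range (T + 1)).inf' Finset.nonempty_range_add_one S ≤ (L 0 - ℓ) / (μ * (T + 1)) := by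
  set s := (Finset.range (T + 1)).inf' Finset.nonempty_range_add_one S
  rw [le_div_iff₀ (by positivity)]
  calc s * (μ * (T + 1)) = μ * ∑ _τ ∈ Finset.range (T + 1), s := by
        rw [Finset.sum_const, Finset.card_range, nsmul_eq_mul]; push_cast; ring
    _ ≤ μ * ∑ τ ∈ Finset.range (T + 1), S τ := by
        gcongr with τ hτ; exact Finset.inf'_le S hτ
    _ ≤ ∑ τ ∈ Finset.range (T + 1), (L τ - L (τ + 1)) := by
        rw [Finset.mul_sum]; gcongr with τ; linarith [hstep τ]
    _ = L 0 - L (T + 1) := Finset.sum_range_sub' L (T + 1)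
    _ ≤ L 0 - ℓ := by linarith [hℓ (T + 1)]

namespace AWF

variable {M N : ℕ}

theorem norm_mul_csgn (z : ℂ) : (‖z‖ : ℂ) * csgn z = z := by
  by_cases hz : z = 0
  · simp [hz]
  · have : (‖z‖ : ℂ) ≠ 0 := by exact_mod_cast norm_ne_zero_iff.mpr hz
    rw [csgn, if_neg hz, mul_div_cancel₀ _ this]

theorem norm_csgn {z : ℂ} (hz : z ≠ 0) : ‖csgn z‖ = 1 := by
  rw [csgn, if_neg hz, norm_div, Complex.norm_real, norm_norm, div_self (norm_ne_zero_iff.mpr hz)]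

theorem sq_sub_norm_sub_norm_sub_mul_csgn_sq_le {β : ℝ} (hβ : 0 ≤ β) (z w : ℂ) :
    (β - ‖w‖) ^ 2 - ‖w - β * csgn z‖ ^ 2 ≤ (β - ‖z‖) ^ 2 - ‖z - β * csgn z‖ ^ 2 := by
  by_cases hz : z = 0
  · simp only [hz, csgn, if_true, mul_zero, sub_zero, norm_zero]
    nlinarith [norm_nonneg w]
  have hβc : ‖(β : ℂ) * csgn z‖ = β := by
    rw [norm_mul, Complex.norm_real, Real.norm_of_nonneg hβ, norm_csgn hz, mul_one]
  have hzres : ‖z - β * csgn z‖ = |β - ‖z‖| := by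
    have : z - β * csgn z = ((‖z‖ - β : ℝ) : ℂ) * csgn z := by
      rw [Complex.ofReal_sub, sub_mul, norm_mul_csgn]
    rw [this, norm_mul, norm_csgn hz, mul_one, Complex.norm_real, Real.norm_eq_abs, abs_sub_comm]
  have hwres : |β - ‖w‖| ≤ ‖w - β * csgn z‖ := by
    have := abs_norm_sub_norm_le w (β * csgn z)
    rwa [hβc, abs_sub_comm] at this
  rw [hzres, sq_abs, sub_self, sub_nonpos, ← sq_abs]
  exact pow_le_pow_left₀ (abs_nonneg _) hwres 2

def phasedData (A : Matrix (Fin M) (Fin N) ℂ) (b : Fin M → ℝ) (f : Fin N → ℂ) : Fin M → ℂ :=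
  fun m => b m * csgn ((A *ᵥ f) m)

theorem wGrad_eq (A : Matrix (Fin M) (Fin N) ℂ) (b : Fin M → ℝ) (f : Fin N → ℂ) :
    wGrad A b f = Aᴴ *ᵥ (A *ᵥ f - phasedData A b f) :=
  rfl

theorem ampLoss_sub_norm_sub_phasedData_sq_le (A : Matrix (Fin M) (Fin N) ℂ) {b : Fin M → ℝ} (hb : ∀ m, 0 ≤ b m)
    (f g : Fin N → ℂ) :
    ampLoss A b g - ‖toLp 2 (A *ᵥ g - phasedData A b f)‖ ^ 2
      ≤ ampLoss A b f - ‖toLp 2 (A *ᵥ f - phasedData A b f)‖ ^ 2 := by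
  simp only [ampLoss, EuclideanSpace.norm_sq_eq, ← Finset.sum_sub_distrib]
  exact Finset.sum_le_sum fun m _ =>
    sq_sub_norm_sub_norm_sub_mul_csgn_sq_le (hb m) ((A *ᵥ f) m) ((A *ᵥ g) m)

-- `‖A‖² = ‖Aᴴ A‖`, and `Aᴴ A` is unitarily similar to the diagonal matrix of its eigenvalues.
open scoped ComplexOrder in
theorem l2_opNorm_sq_le_lamMax (A : Matrix (Fin M) (Fin N) ℂ) : ‖A‖ ^ 2 ≤ lamMax A := by
  set hH := isHermitian_conjTranspose_mul_self A
  have hev : ∀ i, 0 ≤ hH.eigenvalues i := (posSemidef_conjTranspose_mul_self A).eigenvalues_nonneg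
  rw [sq, ← l2_opNorm_conjTranspose_mul_self, hH.spectral_theorem, Unitary.conjStarAlgAut_apply,
    ← Unitary.coe_star, CStarRing.norm_mul_coe_unitary, CStarRing.norm_coe_unitary_mul,
    l2_opNorm_diagonal]
  refine (pi_norm_le_iff_of_nonneg (Real.iSup_nonneg hev)).mpr fun i => ?_
  rw [Function.comp_apply, RCLike.norm_ofReal, abs_of_nonneg (hev i)]
  exact le_ciSup (Set.finite_range _).bddAbove i

theorem norm2_eq_norm_toLp {n : ℕ} (v : Fin n → ℂ) : norm2 v = ‖toLp 2 v‖ := by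
  rw [norm2, EuclideanSpace.norm_eq]

theorem ampLoss_sub_smul_wGrad_le {A : Matrix (Fin M) (Fin N) ℂ} {b : Fin M → ℝ}
    (hb : ∀ m, 0 ≤ b m) {μ : ℝ} (hμ : 0 ≤ μ) (hμA : μ * lamMax A ≤ 1) (f : Fin N → ℂ) :
    ampLoss A b (f - μ • wGrad A b f) ≤ ampLoss A b f - μ * norm2 (wGrad A b f) ^ 2 := by
  set r := A *ᵥ f - phasedData A b f
  have hres : A *ᵥ (f - μ • wGrad A b f) - phasedData A b f = r - μ • A *ᵥ (Aᴴ *ᵥ r) := by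
    rw [mulVec_sub, mulVec_smul, wGrad_eq, sub_right_comm]
  have hsurrogate := ampLoss_sub_norm_sub_phasedData_sq_le A hb f (f - μ • wGrad A b f)
  have hdescent := A.norm_sub_smul_mulVec_conjTranspose_mulVec_sq_le r hμ
    ((mul_le_mul_of_nonneg_left (l2_opNorm_sq_le_lamMax A) hμ).trans hμA)
  rw [hres] at hsurrogate
  have hgrad : norm2 (wGrad A b f) = ‖toLp 2 (Aᴴ *ᵥ r)‖ := norm2_eq_norm_toLp _
  rw [hgrad]
  linarith

/-- For WF iterates with step size `μ̄ = 1/λmax(AᴴA)` and a global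
minimizer `f̂` of `L`, `min_{0 ≤ τ ≤ T} ‖G(f_τ)‖² ≤ (L(f_0) − L(f̂)) / (μ̄ (T+1))`. -/
theorem wf_min_grad_bound
    {M N : ℕ} (A : Matrix (Fin M) (Fin N) ℂ) (b : Fin M → ℝ) (hb : ∀ m, 0 ≤ b m)
    (hpos : 0 < lamMax A)
    (fhat : Fin N → ℂ) (hmin : ∀ g, ampLoss A b fhat ≤ ampLoss A b g)
    (f : ℕ → Fin N → ℂ)
    (hiter : ∀ τ, f (τ + 1) = f τ - (1 / lamMax A) • wGrad A b (f τ))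
    (T : ℕ) :
    (Finset.range (T + 1)).inf' Finset.nonempty_range_add_one
        (fun τ => norm2 (wGrad A b (f τ)) ^ 2)
      ≤ (ampLoss A b (f 0) - ampLoss A b fhat) / ((1 / lamMax A) * (T + 1)) := by
  have hμ : 0 < 1 / lamMax A := by positivity
  refine inf'_range_le_div_of_descent (L := fun τ => ampLoss A b (f τ)) hμ (fun τ => ?_)
    (fun τ => hmin (f τ)) T
  rw [hiter τ]
  exact ampLoss_sub_smul_wGrad_le hb hμ.le (one_div_mul_cancel hpos.ne').le (f τ)

end AWF
end
end

section
/- Fix ε > 0 and define iterates f_{τ+1} = f_τ − μ̄·g_ε(f_τ) from an arbitrary f_0 ∈ ℂ^N, where μ̄ = 1/L̄ with L̄ = λmax(A^H A) > 0. Then for every T ≥ 0, Σ_{τ=0}^{T} ‖g_ε(f_τ)‖₂² ≤ L̄·(L_ε(f_0) − inf_{f ∈ ℂ^N} L_ε(f)). -/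
open scoped BigOperators
open Matrix

noncomputable section

namespace AWF

variable {M N : ℕ}

/-- Smoothed amplitude loss `L_ε(f) = ∑ (√(|(Af)_m|² + ε) − b_m)²`. -/
def smLoss (A : Matrix (Fin M) (Fin N) ℂ) (b : Fin M → ℝ) (ε : ℝ) (f : Fin N → ℂ) : ℝ :=
  ∑ m, (Real.sqrt (‖A.mulVec f m‖ ^ 2 + ε) - b m) ^ 2

/-- Wirtinger gradient of the smoothed loss:
`g_ε(f) = ∑_m (1 − b_m/√(|(Af)_m|²+ε)) (a_m a_mᴴ) f`, where `a_mᴴ` is the `m`-th row of `A`. -/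
def smGrad (A : Matrix (Fin M) (Fin N) ℂ) (b : Fin M → ℝ) (ε : ℝ) (f : Fin N → ℂ) :
    Fin N → ℂ := fun n =>
  ∑ m, (((1 - b m / Real.sqrt (‖A.mulVec f m‖ ^ 2 + ε)) : ℝ) : ℂ)
      * (star (A m n) * A.mulVec f m)

end AWF

/-! Each summand `(√(|u|² + ε) − b)²` is majorized around `u` by a quadratic in `u' − u`: its
quadratic part expands exactly, and `−2b√(|u|² + ε)` is concave, so it lies below its tangent.
Summing over `m`, the linear term is `2 Re⟨g_ε(f), h⟩` and the quadratic term is `‖Ah‖² ≤ L̄‖h‖²`,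
so the step `h = −g_ε(f)/L̄` decreases `L_ε` by at least `‖g_ε(f)‖²/L̄`. Summing these decreases
telescopes to `L_ε(f_0) − L_ε(f_{T+1}) ≤ L_ε(f_0) − inf L_ε`. -/

namespace Matrix

variable {𝕜 n : Type*} [RCLike 𝕜] [Fintype n]

theorem re_star_dotProduct_self (v : n → 𝕜) : RCLike.re (star v ⬝ᵥ v) = ∑ i, ‖v i‖ ^ 2 := by
  simp only [dotProduct, Pi.star_apply, RCLike.star_def, RCLike.conj_mul, map_sum]
  norm_cast

theorem re_star_dotProduct_diagonal_mulVec [DecidableEq n] (d : n → ℝ) (v : n → 𝕜) :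
    RCLike.re (star v ⬝ᵥ diagonal (RCLike.ofReal ∘ d) *ᵥ v) = ∑ i, d i * ‖v i‖ ^ 2 := by
  simp only [dotProduct, mulVec_diagonal, Pi.star_apply, RCLike.star_def, Function.comp_apply,
    mul_left_comm _ (d _ : 𝕜), RCLike.conj_mul, map_sum]
  norm_cast

theorem IsHermitian.re_star_dotProduct_mulVec_le [DecidableEq n] {H : Matrix n n 𝕜}
    (hH : H.IsHermitian) (v : n → 𝕜) :
    RCLike.re (star v ⬝ᵥ H *ᵥ v) ≤ (⨆ i, hH.eigenvalues i) * ∑ i, ‖v i‖ ^ 2 := by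
  set U : Matrix n n 𝕜 := (hH.eigenvectorUnitary : Matrix n n 𝕜)
  have hUU : U * star U = 1 := Unitary.coe_mul_star_self _
  set w := star U *ᵥ v
  have hstar : star v ᵥ* U = star w := by
    rw [star_mulVec, star_eq_conjTranspose, conjTranspose_conjTranspose]
  have hquad : star v ⬝ᵥ H *ᵥ v = star w ⬝ᵥ diagonal (RCLike.ofReal ∘ hH.eigenvalues) *ᵥ w := by
    conv_lhs => rw [hH.spectral_theorem, Unitary.conjStarAlgAut_apply]
    rw [← mulVec_mulVec, ← mulVec_mulVec, dotProduct_mulVec, hstar]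
  have hnorm : ∑ i, ‖w i‖ ^ 2 = ∑ i, ‖v i‖ ^ 2 := by
    rw [← re_star_dotProduct_self, ← re_star_dotProduct_self, ← hstar, ← dotProduct_mulVec,
      mulVec_mulVec, hUU, one_mulVec]
  rw [hquad, re_star_dotProduct_diagonal_mulVec, ← hnorm, Finset.mul_sum]
  exact Finset.sum_le_sum fun i _ => mul_le_mul_of_nonneg_right
    (le_ciSup (Set.finite_range _).bddAbove i) (sq_nonneg _)

end Matrix

section SmoothedNorm

open scoped InnerProductSpace

variable {E : Type*} [NormedAddCommGroup E] [InnerProductSpace ℝ E]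

/-- Cauchy–Schwarz for the augmented vectors `(u, √ε)` and `(v, √ε)`. -/
theorem real_inner_add_le_sqrt_mul_sqrt {ε : ℝ} (hε : 0 ≤ ε) (u v : E) :
    ⟪u, v⟫_ℝ + ε ≤ √(‖u‖ ^ 2 + ε) * √(‖v‖ ^ 2 + ε) := by
  rw [← Real.sqrt_mul (by positivity)]
  calc ⟪u, v⟫_ℝ + ε ≤ ‖u‖ * ‖v‖ + ε := by gcongr; exact real_inner_le_norm u v
    _ ≤ √((‖u‖ ^ 2 + ε) * (‖v‖ ^ 2 + ε)) :=
      Real.le_sqrt_of_sq_le (by nlinarith [mul_nonneg hε (sq_nonneg (‖u‖ - ‖v‖))])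

theorem sqrt_norm_sq_add_tangent_le {ε : ℝ} (hε : 0 < ε) (u d : E) :
    √(‖u‖ ^ 2 + ε) + ⟪u, d⟫_ℝ / √(‖u‖ ^ 2 + ε) ≤ √(‖u + d‖ ^ 2 + ε) := by
  have hs : 0 < √(‖u‖ ^ 2 + ε) := Real.sqrt_pos.2 (by positivity)
  have key := real_inner_add_le_sqrt_mul_sqrt hε.le u (u + d)
  rw [inner_add_right, real_inner_self_eq_norm_sq] at key
  rw [← le_sub_iff_add_le', div_le_iff₀ hs]
  nlinarith [Real.sq_sqrt (by positivity : 0 ≤ ‖u‖ ^ 2 + ε)]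

theorem sq_sqrt_norm_sq_add_sub_le {ε β : ℝ} (hε : 0 < ε) (hβ : 0 ≤ β) (u d : E) :
    (√(‖u + d‖ ^ 2 + ε) - β) ^ 2 ≤ (√(‖u‖ ^ 2 + ε) - β) ^ 2
      + 2 * (1 - β / √(‖u‖ ^ 2 + ε)) * ⟪u, d⟫_ℝ + ‖d‖ ^ 2 := by
  have htan := mul_le_mul_of_nonneg_left (sqrt_norm_sq_add_tangent_le hε u d) hβ
  have hu := Real.sq_sqrt (by positivity : 0 ≤ ‖u‖ ^ 2 + ε)
  have hud := Real.sq_sqrt (by positivity : 0 ≤ ‖u + d‖ ^ 2 + ε)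
  have hexp := norm_add_sq_real u d
  have : β * (⟪u, d⟫_ℝ / √(‖u‖ ^ 2 + ε)) = β / √(‖u‖ ^ 2 + ε) * ⟪u, d⟫_ℝ := by ring
  nlinarith

end SmoothedNorm

theorem sum_range_le_mul_sub_iInf {α : Type*} {F : α → ℝ} (hF : BddBelow (Set.range F))
    (x : ℕ → α) (s : ℕ → ℝ) {L : ℝ} (hL : 0 ≤ L)
    (hdesc : ∀ τ, s τ ≤ L * (F (x τ) - F (x (τ + 1)))) (T : ℕ) :
    ∑ τ ∈ Finset.range (T + 1), s τ ≤ L * (F (x 0) - ⨅ y, F y) :=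
  calc ∑ τ ∈ Finset.range (T + 1), s τ
      ≤ ∑ τ ∈ Finset.range (T + 1), L * (F (x τ) - F (x (τ + 1))) :=
        Finset.sum_le_sum fun τ _ => hdesc τ
    _ = L * (F (x 0) - F (x (T + 1))) := by
        rw [← Finset.mul_sum, Finset.sum_range_sub' (fun τ => F (x τ))]
    _ ≤ L * (F (x 0) - ⨅ y, F y) := by gcongr; exact ciInf_le hF _

namespace AWF

section

open scoped InnerProductSpace

variable {M N : ℕ} (A : Matrix (Fin M) (Fin N) ℂ) (b : Fin M → ℝ) (ε : ℝ)

theorem norm2_sq {n : ℕ} (v : Fin n → ℂ) : norm2 v ^ 2 = ∑ i, ‖v i‖ ^ 2 :=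
  Real.sq_sqrt (Finset.sum_nonneg fun _ _ => sq_nonneg _)

theorem sum_norm_sq_mulVec_le_lamMax (d : Fin N → ℂ) :
    ∑ m, ‖(A *ᵥ d) m‖ ^ 2 ≤ lamMax A * ∑ n, ‖d n‖ ^ 2 := by
  rw [← re_star_dotProduct_self, star_mulVec, ← dotProduct_mulVec, mulVec_mulVec]
  exact (isHermitian_conjTranspose_mul_self A).re_star_dotProduct_mulVec_le d

theorem smLoss_nonneg (f : Fin N → ℂ) : 0 ≤ smLoss A b ε f :=
  Finset.sum_nonneg fun _ _ => sq_nonneg _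

theorem smGrad_eq_conjTranspose_mulVec (f : Fin N → ℂ) :
    smGrad A b ε f =
      Aᴴ *ᵥ fun m => ((1 - b m / √(‖(A *ᵥ f) m‖ ^ 2 + ε) : ℝ) : ℂ) * (A *ᵥ f) m := by
  ext n
  simp only [smGrad, mulVec, dotProduct, conjTranspose_apply]
  exact Finset.sum_congr rfl fun m _ => mul_left_comm _ _ _

theorem re_star_smGrad_dotProduct (f h : Fin N → ℂ) :
    RCLike.re (star (smGrad A b ε f) ⬝ᵥ h) =
      ∑ m, (1 - b m / √(‖(A *ᵥ f) m‖ ^ 2 + ε)) * ⟪(A *ᵥ f) m, (A *ᵥ h) m⟫_ℝ := by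
  rw [smGrad_eq_conjTranspose_mulVec, star_mulVec, conjTranspose_conjTranspose,
    ← dotProduct_mulVec]
  simp only [dotProduct, map_sum, Complex.inner, Pi.star_apply, star_mul', Complex.star_def,
    Complex.conj_ofReal]
  refine Finset.sum_congr rfl fun m _ => ?_
  rw [mul_assoc, mul_comm ((starRingEnd ℂ) _)]
  exact Complex.re_ofReal_mul _ _

theorem smLoss_add_le (hb : ∀ m, 0 ≤ b m) (hε : 0 < ε) (f h : Fin N → ℂ) :
    smLoss A b ε (f + h) ≤
      smLoss A b ε f + 2 * RCLike.re (star (smGrad A b ε f) ⬝ᵥ h) + ∑ m, ‖(A *ᵥ h) m‖ ^ 2 := by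
  rw [re_star_smGrad_dotProduct, Finset.mul_sum, smLoss, smLoss, ← Finset.sum_add_distrib,
    ← Finset.sum_add_distrib, mulVec_add]
  refine Finset.sum_le_sum fun m _ => ?_
  rw [← mul_assoc]
  exact sq_sqrt_norm_sq_add_sub_le hε (hb m) _ _

theorem sum_norm_sq_smGrad_le (hb : ∀ m, 0 ≤ b m) (hpos : 0 < lamMax A) (hε : 0 < ε)
    (f : Fin N → ℂ) :
    ∑ n, ‖smGrad A b ε f n‖ ^ 2 ≤
      lamMax A * (smLoss A b ε f - smLoss A b ε (f - (1 / lamMax A) • smGrad A b ε f)) := by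
  have hmaj := smLoss_add_le A b ε hb hε f (-(1 / lamMax A) • smGrad A b ε f)
  rw [neg_smul, ← sub_eq_add_neg, ← neg_smul] at hmaj
  set L := lamMax A
  set g := smGrad A b ε f
  set S := ∑ n, ‖g n‖ ^ 2
  have hlin : RCLike.re (star g ⬝ᵥ (-(1 / L)) • g) = -(1 / L) * S := by
    rw [dotProduct_smul, RCLike.smul_re, re_star_dotProduct_self]
  have hquad : ∑ m, ‖(A *ᵥ (-(1 / L)) • g) m‖ ^ 2 ≤ (1 / L) * S := by
    calc ∑ m, ‖(A *ᵥ (-(1 / L)) • g) m‖ ^ 2 ≤ L * ∑ n, ‖((-(1 / L)) • g) n‖ ^ 2 :=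
          sum_norm_sq_mulVec_le_lamMax A _
      _ = L * ((1 / L) ^ 2 * S) := by
          simp only [Pi.smul_apply, norm_smul, norm_neg, Real.norm_eq_abs, sq_abs, mul_pow,
            ← Finset.mul_sum, S]
      _ = (1 / L) * S := by field_simp
  rw [hlin] at hmaj
  have hLS : L * ((1 / L) * S) = S := by field_simp
  nlinarith

end

/-- For iterates `f_{τ+1} = f_τ − μ̄ g_ε(f_τ)` with `μ̄ = 1/L̄`,
`L̄ = λmax(AᴴA) > 0`: `∑_{τ=0}^T ‖g_ε(f_τ)‖₂² ≤ L̄ (L_ε(f_0) − inf L_ε)`. -/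
theorem smLoss_sum_grad_bound
    {M N : ℕ} (A : Matrix (Fin M) (Fin N) ℂ) (b : Fin M → ℝ) (hb : ∀ m, 0 ≤ b m)
    (hpos : 0 < lamMax A) (ε : ℝ) (hε : 0 < ε)
    (f : ℕ → Fin N → ℂ)
    (hiter : ∀ τ, f (τ + 1) = f τ - (1 / lamMax A) • smGrad A b ε (f τ))
    (T : ℕ) :
    ∑ τ ∈ Finset.range (T + 1), norm2 (smGrad A b ε (f τ)) ^ 2
      ≤ lamMax A * (smLoss A b ε (f 0) - ⨅ g : Fin N → ℂ, smLoss A b ε g) := by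
  refine sum_range_le_mul_sub_iInf ⟨0, Set.forall_mem_range.2 (smLoss_nonneg A b ε)⟩
    f _ hpos.le (fun τ => ?_) T
  rw [norm2_sq, hiter]
  exact sum_norm_sq_smGrad_le A b ε hb hpos hε (f τ)

end AWF
end
end
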